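/- Let (Φ, ω): 𝕍 → 𝕍' be a morphism (Φ: V → V' linear, ω ∈ ∧²V*) and E ⊆ 𝕍 a Lagrangian subspace. Then the forward image E' = {w' ∈ 𝕍' : ∃ w ∈ E, w ~_{(Φ,ω)} w'} is a Lagrangian subspace of 𝕍'. Similarly, for F' ⊆ 𝕍' Lagrangian, the backward image F = {w ∈ 𝕍 : ∃ w' ∈ F', w ~_{(Φ,ω)} w'} is Lagrangian in 𝕍. -/

import Mathlib

open Module

/-- The relation `w ~_{(Φ,ω)} w'` defined by a morphism `(Φ, ω) : V ⊕ V* → V' ⊕ V'*`,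
with the 2-form `ω` encoded as a skew-symmetric map `ωm : V → V*` (so `ι(v)ω = ωm v`). -/
def morphRel {K V V' : Type*} [Field K] [AddCommGroup V] [Module K V]
    [AddCommGroup V'] [Module K V']
    (Φ : V →ₗ[K] V') (ωm : V →ₗ[K] Module.Dual K V)
    (w : V × Module.Dual K V) (w' : V' × Module.Dual K V') : Prop :=
  Φ w.1 = w'.1 ∧ w'.2.comp Φ = w.2 + ωm w.1

/-! The relation `morphRel Φ ωm` preserves the pairing: if `w ~ w'` and `u ~ u'` then
`⟨w', u'⟩ = ⟨w, u⟩`, since the two `ω`-terms cancel by skew-symmetry. Hence both images are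
isotropic. For maximality, testing an element orthogonal to the image against the images of
`0 ∈ E` (resp. the preimages of `0 ∈ F'`) shows that its `V'`-component lies in `range Φ`
(resp. that `w.2 + ι(w.1)ω` factors through `Φ`). The remaining freedom, a vector of `ker Φ`
(resp. a functional vanishing on `range Φ`), is then found by linear duality: a functional
vanishing on `ker P` factors through `P`. -/

open LinearMap

section Duality

variable {K N M Q : Type*} [Field K] [AddCommGroup N] [Module K N] [AddCommGroup M] [Module K M]
  [AddCommGroup Q] [Module K Q]

theorem LinearMap.exists_dual_comp_eq_of_ker_le (P : N →ₗ[K] Q) (f : Dual K N)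
    (h : ker P ≤ ker f) : ∃ γ : Dual K Q, γ ∘ₗ P = f := by
  have hf : f ∈ range P.dualMap := by
    rw [range_dualMap_eq_dualAnnihilator_ker, Submodule.mem_dualAnnihilator]
    exact fun n hn => h hn
  obtain ⟨γ, rfl⟩ := hf
  exact ⟨γ, rfl⟩

theorem LinearMap.mem_range_of_forall_dual (P : N →ₗ[K] Q) (x : Q)
    (h : ∀ γ : Dual K Q, γ ∘ₗ P = 0 → γ x = 0) : x ∈ range P := by
  rw [← Subspace.forall_mem_dualAnnihilator_apply_eq_zero_iff,
    ← ker_dualMap_eq_dualAnnihilator_range]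
  exact h

theorem LinearMap.exists_mem_dualAnnihilator_apply_eq (S : Submodule K N) (P : N →ₗ[K] Q)
    (W : Submodule K Q) (f : Dual K N) (h : ∀ n ∈ S, P n ∈ W → f n = 0) :
    ∃ γ ∈ W.dualAnnihilator, ∀ n ∈ S, γ (P n) = f n := by
  obtain ⟨γ, hγ⟩ := (W.mkQ ∘ₗ P ∘ₗ S.subtype).exists_dual_comp_eq_of_ker_le (f ∘ₗ S.subtype)
    fun n hn => h n n.2 ((Submodule.Quotient.mk_eq_zero W).1 hn)
  refine ⟨γ ∘ₗ W.mkQ, (Submodule.mem_dualAnnihilator _).2 fun q hq => ?_,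
    fun n hn => congr($hγ ⟨n, hn⟩)⟩
  simp [(Submodule.Quotient.mk_eq_zero W).2 hq]

theorem LinearMap.exists_mem_apply_eq [FiniteDimensional K M] (S : Submodule K N)
    (T : N →ₗ[K] Dual K M) (W : Submodule K M) (f : Dual K N)
    (h : ∀ n ∈ S, T n ∈ W.dualAnnihilator → f n = 0) :
    ∃ m ∈ W, ∀ n ∈ S, T n m = f n := by
  obtain ⟨γ, hγW, hγ⟩ := T.exists_mem_dualAnnihilator_apply_eq S W.dualAnnihilator f h
  obtain ⟨m, rfl⟩ := (evalEquiv K M).surjective γ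
  refine ⟨m, ?_, hγ⟩
  rw [← Subspace.comap_dualAnnihilator_dualAnnihilator W]
  exact hγW

end Duality

section Lagrangian

variable {K V V' : Type*} [Field K] [AddCommGroup V] [Module K V] [AddCommGroup V'] [Module K V']

def pairingOrthogonal (S : Set (V × Dual K V)) : Set (V × Dual K V) :=
  {w | ∀ u ∈ S, w.2 u.1 + u.2 w.1 = 0}

def IsLagrangian (S : Set (V × Dual K V)) : Prop :=
  ∀ w, w ∈ S ↔ w ∈ pairingOrthogonal S

def IsLagrangian.toSubmodule {S : Set (V × Dual K V)} (hS : IsLagrangian S) :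
    Submodule K (V × Dual K V) where
  carrier := S
  add_mem' {a b} ha hb := (hS _).2 fun u hu => by
    have ha := (hS a).1 ha u hu
    have hb := (hS b).1 hb u hu
    simp only [Prod.snd_add, Prod.fst_add, LinearMap.add_apply, map_add]
    linear_combination ha + hb
  zero_mem' := (hS 0).2 fun _ _ => by simp
  smul_mem' c x hx := (hS _).2 fun u hu => by
    have hx := (hS x).1 hx u hu
    simp only [Prod.smul_snd, Prod.smul_fst, LinearMap.smul_apply, map_smul, smul_eq_mul]
    linear_combination c * hx

theorem IsLagrangian.zero_mem {S : Set (V × Dual K V)} (hS : IsLagrangian S) : 0 ∈ S :=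
  hS.toSubmodule.zero_mem

namespace morphRel

variable {Φ : V →ₗ[K] V'} {ωm : V →ₗ[K] Dual K V}

def forwardImage (Φ : V →ₗ[K] V') (ωm : V →ₗ[K] Dual K V) (E : Set (V × Dual K V)) :
    Set (V' × Dual K V') :=
  {w' | ∃ w ∈ E, morphRel Φ ωm w w'}

def backwardImage (Φ : V →ₗ[K] V') (ωm : V →ₗ[K] Dual K V) (F' : Set (V' × Dual K V')) :
    Set (V × Dual K V) :=
  {w | ∃ w' ∈ F', morphRel Φ ωm w w'}

theorem pairing_eq (hω : ωm.IsAlt) {w u : V × Dual K V} {w' u' : V' × Dual K V'}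
    (hw : morphRel Φ ωm w w') (hu : morphRel Φ ωm u u') :
    w'.2 u'.1 + u'.2 w'.1 = w.2 u.1 + u.2 w.1 := by
  obtain ⟨hw₁, hw₂⟩ := hw
  obtain ⟨hu₁, hu₂⟩ := hu
  have hwu := congr($hw₂ u.1)
  have huw := congr($hu₂ w.1)
  simp only [comp_apply, LinearMap.add_apply, hu₁, hw₁] at hwu huw
  rw [hwu, huw]
  linear_combination -hω.neg w.1 u.1

variable {E : Set (V × Dual K V)} {F' : Set (V' × Dual K V')}

theorem fst_mem_range_of_mem_pairingOrthogonal (h0 : (0 : V × Dual K V) ∈ E)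
    {w' : V' × Dual K V'} (hw' : w' ∈ pairingOrthogonal (forwardImage Φ ωm E)) :
    w'.1 ∈ range Φ := by
  refine Φ.mem_range_of_forall_dual _ fun γ hγ => ?_
  have h0γ : morphRel Φ ωm 0 (0, γ) := ⟨by simp, by simpa using hγ⟩
  simpa using hw' (0, γ) ⟨0, h0, h0γ⟩

theorem mem_forwardImage_of_mem_pairingOrthogonal [FiniteDimensional K V] (hω : ωm.IsAlt)
    (hE : IsLagrangian E) {w' : V' × Dual K V'}
    (hw' : w' ∈ pairingOrthogonal (forwardImage Φ ωm E)) : w' ∈ forwardImage Φ ωm E := by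
  obtain ⟨v₀, hv₀⟩ := fst_mem_range_of_mem_pairingOrthogonal hE.zero_mem hw'
  -- For `k ∈ ker Φ`, `(v₀ + k, Φ*w'.2 - ι(v₀ + k)ω)` is related to `w'`, and it is orthogonal
  -- to `u ∈ E` iff `m u k = f u`.
  let m : (V × Dual K V) →ₗ[K] Dual K V := snd K V (Dual K V) + ωm ∘ₗ fst K V (Dual K V)
  let f : Dual K (V × Dual K V) :=
    -(w'.2 ∘ₗ Φ ∘ₗ fst K V (Dual K V) + Dual.eval K V v₀ ∘ₗ m)
  have hf : ∀ u ∈ hE.toSubmodule, m u ∈ (ker Φ).dualAnnihilator → f u = 0 := by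
    intro u hu hmu
    obtain ⟨β', hβ'⟩ := Φ.exists_dual_comp_eq_of_ker_le (m u)
      fun k hk => (Submodule.mem_dualAnnihilator _).1 hmu k hk
    have hu' : morphRel Φ ωm u (Φ u.1, β') := ⟨rfl, hβ'⟩
    have hβ'u := hw' (Φ u.1, β') ⟨u, hu, hu'⟩
    have hβ'v₀ : β' w'.1 = m u v₀ := by rw [← hv₀]; exact congr($hβ' v₀)
    change -(w'.2 (Φ u.1) + m u v₀) = 0
    linear_combination -hβ'u + hβ'v₀
  obtain ⟨k, hk, hkf⟩ := m.exists_mem_apply_eq hE.toSubmodule (ker Φ) f hf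
  have hrel : morphRel Φ ωm (v₀ + k, w'.2 ∘ₗ Φ - ωm (v₀ + k)) w' :=
    ⟨by simp [hv₀, mem_ker.1 hk], by simp⟩
  refine ⟨_, (hE _).2 fun u hu => ?_, hrel⟩
  have hku : u.2 k + ωm u.1 k = -(w'.2 (Φ u.1) + (u.2 v₀ + ωm u.1 v₀)) := hkf u hu
  simp only [LinearMap.sub_apply, comp_apply, map_add, LinearMap.add_apply]
  linear_combination hku + hω.neg v₀ u.1 + hω.neg k u.1

theorem exists_dual_comp_eq_of_mem_pairingOrthogonal (hω : ωm.IsAlt)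
    (h0 : (0 : V' × Dual K V') ∈ F')
    {w : V × Dual K V} (hw : w ∈ pairingOrthogonal (backwardImage Φ ωm F')) :
    ∃ α : Dual K V', α ∘ₗ Φ = w.2 + ωm w.1 := by
  refine Φ.exists_dual_comp_eq_of_ker_le _ fun k hk => ?_
  have hk0 : morphRel Φ ωm (k, -ωm k) 0 := ⟨by simpa using hk, by simp⟩
  have hpair := hw (k, -ωm k) ⟨0, h0, hk0⟩
  simp only [LinearMap.neg_apply] at hpair
  rw [mem_ker, LinearMap.add_apply]
  linear_combination hpair - hω.neg k w.1

theorem mem_backwardImage_of_mem_pairingOrthogonal (hω : ωm.IsAlt) (hF' : IsLagrangian F')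
    {w : V × Dual K V} (hw : w ∈ pairingOrthogonal (backwardImage Φ ωm F')) :
    w ∈ backwardImage Φ ωm F' := by
  obtain ⟨α₀, hα₀⟩ := exists_dual_comp_eq_of_mem_pairingOrthogonal hω hF'.zero_mem hw
  -- For `γ` vanishing on `range Φ`, `w` is related to `(Φ w.1, α₀ + γ)`, and the latter is
  -- orthogonal to `u' ∈ F'` iff `γ u'.1 = g u'`.
  let g : Dual K (V' × Dual K V') :=
    -(α₀ ∘ₗ fst K V' (Dual K V') + applyₗ (Φ w.1) ∘ₗ snd K V' (Dual K V'))
  have hg : ∀ u' ∈ hF'.toSubmodule, fst K V' (Dual K V') u' ∈ range Φ → g u' = 0 := by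
    rintro u' hu' ⟨u, hu⟩
    have hrel : morphRel Φ ωm (u, u'.2 ∘ₗ Φ - ωm u) u' := ⟨hu, by simp⟩
    have hpair := hw (u, u'.2 ∘ₗ Φ - ωm u) ⟨u', hu', hrel⟩
    have hα : α₀ u'.1 = w.2 u + ωm w.1 u := by
      rw [← show Φ u = u'.1 from hu]; exact congr($hα₀ u)
    simp only [LinearMap.sub_apply, comp_apply] at hpair
    change -(α₀ u'.1 + u'.2 (Φ w.1)) = 0
    linear_combination -hpair - hα + hω.neg u w.1
  obtain ⟨γ, hγ, hγg⟩ := (fst K V' (Dual K V')).exists_mem_dualAnnihilator_apply_eq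
    hF'.toSubmodule (range Φ) g hg
  have hrel : morphRel Φ ωm w (Φ w.1, α₀ + γ) := ⟨rfl, ?_⟩
  · refine ⟨_, (hF' _).2 fun u' hu' => ?_, hrel⟩
    have hγu' : γ u'.1 = -(α₀ u'.1 + u'.2 (Φ w.1)) := hγg u' hu'
    simp only [LinearMap.add_apply]
    linear_combination hγu'
  · ext u
    simp [(Submodule.mem_dualAnnihilator _).1 hγ (Φ u) (mem_range_self Φ u), ← hα₀]

theorem isLagrangian_forwardImage [FiniteDimensional K V] (hω : ωm.IsAlt)
    (hE : IsLagrangian E) :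
    IsLagrangian (forwardImage Φ ωm E) := fun _ =>
  ⟨fun ⟨w, hw, hww'⟩ _ ⟨u, hu, huu'⟩ => (pairing_eq hω hww' huu').trans ((hE w).1 hw u hu),
    mem_forwardImage_of_mem_pairingOrthogonal hω hE⟩

theorem isLagrangian_backwardImage (hω : ωm.IsAlt) (hF' : IsLagrangian F') :
    IsLagrangian (backwardImage Φ ωm F') := fun _ =>
  ⟨fun ⟨w', hw', hww'⟩ _ ⟨u', hu', huu'⟩ =>
    (pairing_eq hω hww' huu').symm.trans ((hF' w').1 hw' u' hu'),
    mem_backwardImage_of_mem_pairingOrthogonal hω hF'⟩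

end morphRel

end Lagrangian

theorem pure_spinors_stmt8_general {K V V' : Type*} [Field K]
    [AddCommGroup V] [Module K V] [FiniteDimensional K V]
    [AddCommGroup V'] [Module K V']
    (Φ : V →ₗ[K] V') (ωm : V →ₗ[K] Module.Dual K V) (halt : ∀ v, ωm v v = 0)
    (E : Set (V × Module.Dual K V)) (F' : Set (V' × Module.Dual K V'))
    (hE : ∀ w, w ∈ E ↔ ∀ u ∈ E, w.2 u.1 + u.2 w.1 = 0)
    (hF' : ∀ w', w' ∈ F' ↔ ∀ u' ∈ F', w'.2 u'.1 + u'.2 w'.1 = 0) :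
    (∀ w' : V' × Module.Dual K V',
      (∃ w ∈ E, morphRel Φ ωm w w') ↔
        ∀ u' : V' × Module.Dual K V', (∃ w ∈ E, morphRel Φ ωm w u') →
          w'.2 u'.1 + u'.2 w'.1 = 0) ∧
    (∀ w : V × Module.Dual K V,
      (∃ w' ∈ F', morphRel Φ ωm w w') ↔
        ∀ u : V × Module.Dual K V, (∃ u' ∈ F', morphRel Φ ωm u u') →
          w.2 u.1 + u.2 w.1 = 0) :=
  ⟨morphRel.isLagrangian_forwardImage halt hE, morphRel.isLagrangian_backwardImage halt hF'⟩

/-- for a morphism `(Φ, ω)` and Lagrangian subspaces `E ⊆ 𝕍`, `F' ⊆ 𝕍'`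
(Lagrangian: equal to their own orthogonal with respect to the pairing form), the forward
image of `E` is Lagrangian in `𝕍'` and the backward image of `F'` is Lagrangian in `𝕍`. -/
theorem pure_spinors_stmt8 {K V V' : Type*} [Field K] [CharZero K]
    [AddCommGroup V] [Module K V] [FiniteDimensional K V]
    [AddCommGroup V'] [Module K V'] [FiniteDimensional K V']
    (Φ : V →ₗ[K] V') (ωm : V →ₗ[K] Module.Dual K V) (halt : ∀ v, ωm v v = 0)
    (E : Set (V × Module.Dual K V)) (F' : Set (V' × Module.Dual K V'))
    (hE : ∀ w, w ∈ E ↔ ∀ u ∈ E, w.2 u.1 + u.2 w.1 = 0)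
    (hF' : ∀ w', w' ∈ F' ↔ ∀ u' ∈ F', w'.2 u'.1 + u'.2 w'.1 = 0) :
    (∀ w' : V' × Module.Dual K V',
      (∃ w ∈ E, morphRel Φ ωm w w') ↔
        ∀ u' : V' × Module.Dual K V', (∃ w ∈ E, morphRel Φ ωm w u') →
          w'.2 u'.1 + u'.2 w'.1 = 0) ∧
    (∀ w : V × Module.Dual K V,
      (∃ w' ∈ F', morphRel Φ ωm w w') ↔
        ∀ u : V × Module.Dual K V, (∃ u' ∈ F', morphRel Φ ωm u u') →
          w.2 u.1 + u.2 w.1 = 0) :=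
  pure_spinors_stmt8_general Φ ωm halt E F' hE hF'
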